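/- For all j ≤ min(l, m-l), the identity 2^{2j} * C(m; m-j-l, 2j, l-j) / (2j+1) = C(m,l) * ((-l)_j * (-(m-l))_j) / ((3/2)_j * j!) holds as an equation of rational numbers. -/

import Mathlib

/-!
Both Pochhammer symbols at negative integers are signed descending factorials,
`(-n)_j = (-1)^j n!/(n-j)!`, and `2^j (3/2)_j = 3·5⋯(2j+1) = (2j+1)‼`, so that
`4^j j! (3/2)_j = (2j+1)!`. After these substitutions the signs cancel and both sides
equal `4^j m! / ((l-j)! (m-l-j)! (2j+1)!)`.
-/

open Nat Polynomial

theorem ascPochhammer_eval_neg_natCast {R : Type*} [CommRing R] (n j : ℕ) :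
    (ascPochhammer R j).eval (-(n : R)) = (-1) ^ j * n.descFactorial j := by
  rw [ascPochhammer_eval_neg_eq_descPochhammer, descPochhammer_eval_eq_descFactorial]

theorem two_pow_mul_ascPochhammer_eval_three_halves {K : Type*} [Field K] [NeZero (2 : K)]
    (j : ℕ) : 2 ^ j * (ascPochhammer K j).eval (3 / 2) = ((2 * j + 1)‼ : ℕ) := by
  induction j with
  | zero => simp
  | succ j ih =>
    have h2 : (2 : K) ≠ 0 := two_ne_zero
    rw [ascPochhammer_succ_eval, pow_succ,
      show 2 * (j + 1) + 1 = 2 * j + 1 + 2 by ring, doubleFactorial_add_two, Nat.cast_mul, ← ih]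
    field_simp
    push_cast
    ring

theorem factorial_two_mul_add_one (j : ℕ) : (2 * j + 1)! = 2 ^ j * j ! * (2 * j + 1)‼ := by
  rw [factorial_eq_mul_doubleFactorial, doubleFactorial_two_mul, mul_comm]

theorem trinomial_term_eq_hypergeometric_term (m l j : ℕ) (hlm : l ≤ m)
    (hj : j ≤ min l (m - l)) :
    (2 : ℚ) ^ (2 * j) *
        ((m.factorial : ℚ) /
          (((m - j - l).factorial : ℚ) * ((2 * j).factorial : ℚ) * ((l - j).factorial : ℚ)))
        / (2 * (j : ℚ) + 1)
      = (m.choose l : ℚ) *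
          ((ascPochhammer ℚ j).eval (-(l : ℚ)) * (ascPochhammer ℚ j).eval (-((m : ℚ) - (l : ℚ))))
          / ((ascPochhammer ℚ j).eval (3 / 2) * (j.factorial : ℚ)) := by
  obtain ⟨hjl, hjml⟩ := le_min_iff.mp hj
  have three_halves := two_pow_mul_ascPochhammer_eval_three_halves (K := ℚ) j
  have odd_factorial : ((2 * j) ! : ℚ) * (2 * j + 1) = 2 ^ j * j ! * (2 * j + 1)‼ := by
    rw [mul_comm]
    exact_mod_cast (factorial_succ (2 * j)).symm.trans (factorial_two_mul_add_one j)
  rw [← Nat.cast_sub hlm, ascPochhammer_eval_neg_natCast, ascPochhammer_eval_neg_natCast,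
    Nat.sub_right_comm, Nat.cast_choose ℚ hlm, ← factorial_mul_descFactorial hjl,
    ← factorial_mul_descFactorial hjml]
  push_cast
  have hl : (l.descFactorial j : ℚ) ≠ 0 := cast_ne_zero.mpr (descFactorial_pos.mpr hjl).ne'
  have hml : ((m - l).descFactorial j : ℚ) ≠ 0 :=
    cast_ne_zero.mpr (descFactorial_pos.mpr hjml).ne'
  rw [eq_div_of_mul_eq (by positivity) ((mul_comm _ _).trans three_halves)]
  field_simp
  rw [odd_factorial, ← pow_mul, mul_comm j 2, (even_two_mul j).neg_one_pow]
  ring
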